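/- Let V : ℤ^d → ℝ be p-periodic, let d' = (d'_1,…,d'_d) ∈ (ℤ₊)^d, and let d'∗p = (d'_1 p_1, …, d'_d p_d), so that V is also d'∗p-periodic. Then for every θ ∈ ℝ^d the characteristic polynomials satisfy det(λI − Ĥ_{d'∗p, θ}) = ∏_{φ ∈ Φ} det(λI − Ĥ_{p, φ}), where Φ = {(θ_j + ℓ_j/(d'_j p_j))_{j=1}^{d} : ℓ_j ∈ {0,…,d'_j − 1}}. In particular, the eigenvalues of Ĥ_{d'∗p, θ}, with multiplicity, are the union over φ ∈ Φ of the eigenvalues of Ĥ_{p, φ}. -/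

import Mathlib

noncomputable section

/-- `V : ℤ^d → ℝ` is `p`-periodic. -/
def IsPeriodic {d : ℕ} (p : Fin d → ℕ) (V : (Fin d → ℤ) → ℝ) : Prop :=
  ∀ (n : Fin d → ℤ) (j : Fin d), V (Function.update n j (n j + (p j : ℤ))) = V n

/-- Fourier coefficient `V̂(k)` for `k ∈ 𝔹`. -/
def Vhat {d : ℕ} (p : Fin d → ℕ) (V : (Fin d → ℤ) → ℝ) (k : ∀ j, Fin (p j)) : ℂ :=
  (∏ j, (p j : ℂ))⁻¹ *
    ∑ n : ∀ j, Fin (p j),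
      (V (fun j => (n j : ℤ) + 1) : ℂ) *
        Complex.exp (-(2 * Real.pi * Complex.I) *
          ∑ j, (((k j : ℕ) : ℂ) / (p j : ℂ)) * (((n j : ℕ) : ℂ) + 1))

/-- Floquet matrix `Ĥ_{p,θ}`. -/
def floquet {d : ℕ} (p : Fin d → ℕ) (V : (Fin d → ℤ) → ℝ) (θ : Fin d → ℂ) :
    Matrix (∀ j, Fin (p j)) (∀ j, Fin (p j)) ℂ :=
  fun l m =>
    (if l = m then ∑ j, 2 * Complex.cos (2 * Real.pi * (((l j : ℕ) : ℂ) / (p j : ℂ) + θ j))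
     else 0) + Vhat p V (l - m)

namespace Stmt18Aux

variable {d : ℕ}

lemma sum_exp_eq (m : ℕ) (hm : 0 < m) (k : ℕ) :
    ∑ s : Fin m, Complex.exp (-(2 * Real.pi * Complex.I) * ((k : ℂ) * ((s : ℕ) : ℂ) / (m : ℂ)))
      = if m ∣ k then (m : ℂ) else 0 := by
  have hm0 : (m : ℂ) ≠ 0 := Nat.cast_ne_zero.mpr hm.ne'
  have h2pi : (2 * Real.pi * Complex.I : ℂ) ≠ 0 := by
    simp [Real.pi_ne_zero, Complex.I_ne_zero]
  set z : ℂ := Complex.exp (-(2 * Real.pi * Complex.I) * ((k : ℂ) / (m : ℂ))) with hz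
  have hterm : ∀ s : Fin m,
      Complex.exp (-(2 * Real.pi * Complex.I) * ((k : ℂ) * ((s : ℕ) : ℂ) / (m : ℂ)))
        = z ^ (s : ℕ) := by
    intro s
    rw [hz, ← Complex.exp_nat_mul]
    congr 1
    ring
  rw [Finset.sum_congr rfl (fun s _ => hterm s)]
  split
  · rename_i h
    obtain ⟨c, rfl⟩ := h
    have hz1 : z = 1 := by
      rw [hz]
      have : -(2 * Real.pi * Complex.I) * (((m * c : ℕ) : ℂ) / (m : ℂ))
          = ((-c : ℤ) : ℂ) * (2 * Real.pi * Complex.I) := by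
        push_cast
        field_simp
      rw [this, Complex.exp_int_mul_two_pi_mul_I]
    simp [hz1]
  · rename_i h
    have hz1 : z ≠ 1 := by
      intro hc
      rw [hz, Complex.exp_eq_one_iff] at hc
      obtain ⟨n, hn⟩ := hc
      have h1 : (2 * Real.pi * Complex.I) * (k : ℂ)
          = (2 * Real.pi * Complex.I) * ((-n * m : ℤ) : ℂ) := by
        field_simp at hn
        push_cast
        linear_combination (-(2 * (Real.pi : ℂ) * Complex.I)) * hn
      have h2 : (k : ℂ) = ((-n * m : ℤ) : ℂ) := mul_left_cancel₀ h2pi h1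
      have hk : (k : ℤ) = -n * m := by exact_mod_cast h2
      exact h (Int.natCast_dvd_natCast.mp ⟨-n, by rw [hk]; ring⟩)
    have hzm : z ^ m = 1 := by
      rw [hz, ← Complex.exp_nat_mul]
      have : (m : ℂ) * (-(2 * Real.pi * Complex.I) * ((k : ℂ) / (m : ℂ)))
          = ((-k : ℤ) : ℂ) * (2 * Real.pi * Complex.I) := by
        push_cast; field_simp
      rw [this, Complex.exp_int_mul_two_pi_mul_I]
    rw [Fin.sum_univ_eq_sum_range (fun i => z ^ i), geom_sum_eq hz1, hzm]
    simp

/-- Split `Fin (a j * b j)` as remainder mod `a j` plus `a j` times quotient. -/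
def splitEquiv (a b : Fin d → ℕ) (ha : ∀ j, 0 < a j) :
    (∀ j, Fin (a j * b j)) ≃ (∀ j, Fin (a j)) × (∀ j, Fin (b j)) where
  toFun n := (fun j => ⟨(n j).val % a j, Nat.mod_lt _ (ha j)⟩,
    fun j => ⟨(n j).val / a j, Nat.div_lt_of_lt_mul (by
      have := (n j).isLt; omega)⟩)
  invFun x := fun j => ⟨(x.1 j).val + a j * (x.2 j).val, by
    have h1 := (x.1 j).isLt
    have h2 := (x.2 j).isLt
    have h3 : a j * ((x.2 j).val + 1) ≤ a j * b j := Nat.mul_le_mul_left _ h2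
    rw [Nat.mul_add, Nat.mul_one] at h3
    omega⟩
  left_inv n := by
    funext j
    exact Fin.ext (Nat.mod_add_div _ _)
  right_inv x := by
    refine Prod.ext (funext fun j => Fin.ext ?_) (funext fun j => Fin.ext ?_)
    · show ((x.1 j).val + a j * (x.2 j).val) % a j = (x.1 j).val
      rw [Nat.add_mul_mod_self_left, Nat.mod_eq_of_lt (x.1 j).isLt]
    · show ((x.1 j).val + a j * (x.2 j).val) / a j = (x.2 j).val
      rw [Nat.add_mul_div_left _ _ (ha j), Nat.div_eq_of_lt (x.1 j).isLt, Nat.zero_add]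

/-- Split `Fin (a j * b j)` as remainder mod `b j` plus `b j` times quotient. -/
def splitEquiv' (a b : Fin d → ℕ) (hb : ∀ j, 0 < b j) :
    (∀ j, Fin (a j * b j)) ≃ (∀ j, Fin (b j)) × (∀ j, Fin (a j)) where
  toFun n := (fun j => ⟨(n j).val % b j, Nat.mod_lt _ (hb j)⟩,
    fun j => ⟨(n j).val / b j, Nat.div_lt_of_lt_mul (by
      have := (n j).isLt
      have hcm := Nat.mul_comm (a j) (b j)
      omega)⟩)
  invFun x := fun j => ⟨(x.1 j).val + b j * (x.2 j).val, by
    have h1 := (x.1 j).isLt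
    have h2 := (x.2 j).isLt
    have h3 : b j * ((x.2 j).val + 1) ≤ b j * a j := Nat.mul_le_mul_left _ h2
    rw [Nat.mul_add, Nat.mul_one] at h3
    have hcm := Nat.mul_comm (a j) (b j)
    omega⟩
  left_inv n := by
    funext j
    exact Fin.ext (Nat.mod_add_div _ _)
  right_inv x := by
    refine Prod.ext (funext fun j => Fin.ext ?_) (funext fun j => Fin.ext ?_)
    · show ((x.1 j).val + b j * (x.2 j).val) % b j = (x.1 j).val
      rw [Nat.add_mul_mod_self_left, Nat.mod_eq_of_lt (x.1 j).isLt]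
    · show ((x.1 j).val + b j * (x.2 j).val) / b j = (x.2 j).val
      rw [Nat.add_mul_div_left _ _ (hb j), Nat.div_eq_of_lt (x.1 j).isLt, Nat.zero_add]

lemma splitEquiv_symm_val (a b : Fin d → ℕ) (ha : ∀ j, 0 < a j)
    (x : (∀ j, Fin (a j)) × (∀ j, Fin (b j))) (j : Fin d) :
    (((splitEquiv a b ha).symm x) j : ℕ) = (x.1 j : ℕ) + a j * (x.2 j : ℕ) := rfl

lemma splitEquiv'_symm_val (a b : Fin d → ℕ) (hb : ∀ j, 0 < b j)
    (x : (∀ j, Fin (b j)) × (∀ j, Fin (a j))) (j : Fin d) :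
    (((splitEquiv' a b hb).symm x) j : ℕ) = (x.1 j : ℕ) + b j * (x.2 j : ℕ) := rfl

lemma dvd_fin_sub_iff {a b : ℕ} (x y : Fin (a * b)) :
    a ∣ (x - y).val ↔ x.val % a = y.val % a := by
  rw [Fin.sub_def]
  show a ∣ (a * b - y.val + x.val) % (a * b) ↔ _
  rw [Nat.dvd_mod_iff (dvd_mul_right a b)]
  have hy : y.val ≤ a * b := le_of_lt y.isLt
  rw [← Int.natCast_dvd_natCast]
  push_cast [hy]
  have he : (a : ℤ) * b - y.val + x.val = (a : ℤ) * b + ((x.val : ℤ) - y.val) := by ring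
  rw [he, dvd_add_right (dvd_mul_right (a : ℤ) (b : ℤ)), ← dvd_sub_comm]
  rw [show ((x.val : ℕ) % a = (y.val : ℕ) % a) ↔ Nat.ModEq a x.val y.val from Iff.rfl]
  rw [Nat.modEq_iff_dvd]

lemma fin_sub_mul {a b : ℕ} (c : ℕ) (hc : c < a) (t u : Fin b)
    (h1 : c + a * t.val < a * b) (h2 : c + a * u.val < a * b) :
    ((⟨c + a * t.val, h1⟩ : Fin (a * b)) - ⟨c + a * u.val, h2⟩).val = a * (t - u).val := by
  rw [Fin.sub_def, Fin.sub_def]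
  show (a * b - (c + a * u.val) + (c + a * t.val)) % (a * b) = a * ((b - u.val + t.val) % b)
  have hb : 0 < b := Fin.pos u
  have key : a * b - (c + a * u.val) + (c + a * t.val) = a * (b - u.val + t.val) := by
    have e1 : a * u.val + a * (b - u.val) = a * b := by
      rw [← Nat.mul_add]
      congr 1
      omega
    have e2 : a ≤ a * (b - u.val) := by
      have : a * 1 ≤ a * (b - u.val) := Nat.mul_le_mul_left _ (by omega)
      omega
    have e3 : a * (b - u.val + t.val) = a * (b - u.val) + a * t.val := by rw [Nat.mul_add]
    omega
  rw [key, Nat.mul_mod_mul_left]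

variable {p : Fin d → ℕ} {V : (Fin d → ℤ) → ℝ}

lemma periodic_update (hV : IsPeriodic p V) (n : Fin d → ℤ) (j : Fin d) (c : ℕ) :
    V (Function.update n j (n j + (c : ℤ) * (p j : ℤ))) = V n := by
  induction c with
  | zero => simp
  | succ c ih =>
    have h := hV (Function.update n j (n j + (c : ℤ) * (p j : ℤ))) j
    rw [Function.update_idem, Function.update_self] at h
    have he : n j + (c : ℤ) * (p j : ℤ) + (p j : ℤ) = n j + ((c + 1 : ℕ) : ℤ) * (p j : ℤ) := by
      push_cast; ring
    rw [he] at h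
    rw [h, ih]

lemma periodic_shift (hV : IsPeriodic p V) (c : Fin d → ℕ) (n : Fin d → ℤ) :
    V (fun j => n j + (c j : ℤ) * (p j : ℤ)) = V n := by
  suffices H : ∀ (s : Finset (Fin d)) (c : Fin d → ℕ), (∀ j ∉ s, c j = 0) →
      ∀ n : Fin d → ℤ, V (fun j => n j + (c j : ℤ) * (p j : ℤ)) = V n by
    exact H Finset.univ c (fun j hj => absurd (Finset.mem_univ j) hj) n
  intro s
  induction s using Finset.induction_on with
  | empty =>
    intro c hc n
    have : (fun j => n j + (c j : ℤ) * (p j : ℤ)) = n := by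
      funext j
      rw [hc j (Finset.notMem_empty j)]
      simp
    rw [this]
  | insert j s hj ih =>
    intro c hc n
    set m : Fin d → ℤ := fun j' => n j' + ((Function.update c j 0 j' : ℕ) : ℤ) * (p j' : ℤ)
      with hm
    have hmj : m j = n j := by simp [hm]
    have key : (fun j' => n j' + (c j' : ℤ) * (p j' : ℤ))
        = Function.update m j (m j + (c j : ℤ) * (p j : ℤ)) := by
      funext j'
      by_cases h : j' = j
      · subst h
        rw [Function.update_self, hmj]
      · rw [Function.update_of_ne h, hm]
        simp [Function.update_of_ne h]
    rw [key, periodic_update hV m j (c j)]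
    exact ih (Function.update c j 0) (fun j' hj' => by
      by_cases h : j' = j
      · subst h; exact Function.update_self _ _ _
      · rw [Function.update_of_ne h]
        exact hc j' (by simp [h, hj'])) n

lemma Vhat_mul (p d' : Fin d → ℕ) (hp : ∀ j, 0 < p j) (hd' : ∀ j, 0 < d' j)
    (V : (Fin d → ℤ) → ℝ) (hV : IsPeriodic p V) (k : ∀ j, Fin (d' j * p j)) :
    Vhat (fun j => d' j * p j) V k =
      (∏ j, ((d' j : ℂ) * (p j : ℂ)))⁻¹ *
        ((∑ t : ∀ j, Fin (p j), (V (fun j => (t j : ℤ) + 1) : ℂ) *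
            Complex.exp (-(2 * Real.pi * Complex.I) *
              ∑ j, (((k j : ℕ) : ℂ) / ((d' j : ℂ) * (p j : ℂ))) * (((t j : ℕ) : ℂ) + 1))) *
          ∏ j, (if d' j ∣ ((k j : ℕ)) then ((d' j : ℕ) : ℂ) else 0)) := by
  have hpc : ∀ j, (p j : ℂ) ≠ 0 := fun j => Nat.cast_ne_zero.mpr (hp j).ne'
  have hdc : ∀ j, (d' j : ℂ) ≠ 0 := fun j => Nat.cast_ne_zero.mpr (hd' j).ne'
  unfold Vhat
  rw [← Equiv.sum_comp ((splitEquiv' d' p hp).symm)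
    (fun n : ∀ j, Fin (d' j * p j) =>
      (V (fun j => (n j : ℤ) + 1) : ℂ) *
        Complex.exp (-(2 * Real.pi * Complex.I) *
          ∑ j, (((k j : ℕ) : ℂ) / ((d' j * p j : ℕ) : ℂ)) * (((n j : ℕ) : ℂ) + 1)))]
  rw [Fintype.sum_prod_type]
  have hterm : ∀ (t : ∀ j, Fin (p j)) (s : ∀ j, Fin (d' j)),
      (V (fun j => (((splitEquiv' d' p hp).symm (t, s)) j : ℤ) + 1) : ℂ) *
        Complex.exp (-(2 * Real.pi * Complex.I) *
          ∑ j, (((k j : ℕ) : ℂ) / ((d' j * p j : ℕ) : ℂ)) *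
            (((((splitEquiv' d' p hp).symm (t, s)) j : ℕ) : ℂ) + 1))
      = ((V (fun j => (t j : ℤ) + 1) : ℂ) *
          Complex.exp (-(2 * Real.pi * Complex.I) *
            ∑ j, (((k j : ℕ) : ℂ) / ((d' j : ℂ) * (p j : ℂ))) * (((t j : ℕ) : ℂ) + 1))) *
        ∏ j, Complex.exp (-(2 * Real.pi * Complex.I) *
            (((k j : ℕ) : ℂ) * ((s j : ℕ) : ℂ) / (d' j : ℂ))) := by
    intro t s
    have hval : ∀ j, (((splitEquiv' d' p hp).symm (t, s)) j : ℕ) = (t j : ℕ) + p j * (s j : ℕ) :=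
      fun j => splitEquiv'_symm_val d' p hp (t, s) j
    have hvpart : V (fun j => (((splitEquiv' d' p hp).symm (t, s)) j : ℤ) + 1)
        = V (fun j => (t j : ℤ) + 1) := by
      have harg : (fun j => (((splitEquiv' d' p hp).symm (t, s)) j : ℤ) + 1)
          = fun j => ((t j : ℤ) + 1) + ((s j : ℕ) : ℤ) * (p j : ℤ) := by
        funext j
        have := hval j
        have hz : ((((splitEquiv' d' p hp).symm (t, s)) j : ℕ) : ℤ)
            = ((t j : ℕ) : ℤ) + (p j : ℤ) * ((s j : ℕ) : ℤ) := by
          rw [this]; push_cast; ring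
        push_cast at hz ⊢
        rw [hz]; ring
      rw [harg, periodic_shift hV (fun j => (s j : ℕ)) (fun j => (t j : ℤ) + 1)]
    have hsum : ∑ j, (((k j : ℕ) : ℂ) / ((d' j * p j : ℕ) : ℂ)) *
          (((((splitEquiv' d' p hp).symm (t, s)) j : ℕ) : ℂ) + 1)
        = (∑ j, (((k j : ℕ) : ℂ) / ((d' j : ℂ) * (p j : ℂ))) * (((t j : ℕ) : ℂ) + 1))
          + ∑ j, (((k j : ℕ) : ℂ) * ((s j : ℕ) : ℂ) / (d' j : ℂ)) := by
      rw [← Finset.sum_add_distrib]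
      refine Finset.sum_congr rfl fun j _ => ?_
      rw [hval j]
      push_cast
      field_simp [hpc j, hdc j]
      ring
    rw [hvpart, hsum, mul_add, Complex.exp_add]
    rw [show -(2 * Real.pi * Complex.I) * ∑ j, (((k j : ℕ) : ℂ) * ((s j : ℕ) : ℂ) / (d' j : ℂ))
        = ∑ j, -(2 * Real.pi * Complex.I) * (((k j : ℕ) : ℂ) * ((s j : ℕ) : ℂ) / (d' j : ℂ))
      from Finset.mul_sum _ _ _]
    rw [Complex.exp_sum]
    ring
  rw [Finset.sum_congr rfl fun t _ => Finset.sum_congr rfl fun s _ => hterm t s]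
  rw [← Finset.sum_mul_sum]
  have hs2 : ∑ s : ∀ j, Fin (d' j), ∏ j, Complex.exp (-(2 * Real.pi * Complex.I) *
      (((k j : ℕ) : ℂ) * ((s j : ℕ) : ℂ) / (d' j : ℂ)))
      = ∏ j, (if d' j ∣ ((k j : ℕ)) then ((d' j : ℕ) : ℂ) else 0) := by
    rw [← Fintype.piFinset_univ,
      ← Finset.prod_univ_sum (fun _ => (Finset.univ : Finset _))
        (fun j (y : Fin (d' j)) => Complex.exp (-(2 * Real.pi * Complex.I) *
          (((k j : ℕ) : ℂ) * ((y : ℕ) : ℂ) / (d' j : ℂ))))]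
    exact Finset.prod_congr rfl fun j _ => sum_exp_eq (d' j) (hd' j) (k j)
  rw [hs2]
  congr 2
  exact Finset.prod_congr rfl fun j _ => by push_cast; ring

lemma VhatA (p d' : Fin d → ℕ) (hp : ∀ j, 0 < p j) (hd' : ∀ j, 0 < d' j)
    (V : (Fin d → ℤ) → ℝ) (hV : IsPeriodic p V) (k : ∀ j, Fin (d' j * p j))
    (j₀ : Fin d) (h : ¬ d' j₀ ∣ ((k j₀ : ℕ))) :
    Vhat (fun j => d' j * p j) V k = 0 := by
  rw [Vhat_mul p d' hp hd' V hV k]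
  have h0 : (∏ j, (if d' j ∣ ((k j : ℕ)) then ((d' j : ℕ) : ℂ) else 0)) = 0 :=
    Finset.prod_eq_zero (Finset.mem_univ j₀) (if_neg h)
  rw [h0, mul_zero, mul_zero]

lemma VhatB (p d' : Fin d → ℕ) (hp : ∀ j, 0 < p j) (hd' : ∀ j, 0 < d' j)
    (V : (Fin d → ℤ) → ℝ) (hV : IsPeriodic p V) (k : ∀ j, Fin (p j))
    (m : ∀ j, Fin (d' j * p j)) (hm : ∀ j, (m j : ℕ) = d' j * (k j : ℕ)) :
    Vhat (fun j => d' j * p j) V m = Vhat p V k := by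
  have hpc : ∀ j, (p j : ℂ) ≠ 0 := fun j => Nat.cast_ne_zero.mpr (hp j).ne'
  have hdc : ∀ j, (d' j : ℂ) ≠ 0 := fun j => Nat.cast_ne_zero.mpr (hd' j).ne'
  rw [Vhat_mul p d' hp hd' V hV m]
  have hif : (∏ j, (if d' j ∣ ((m j : ℕ)) then ((d' j : ℕ) : ℂ) else 0)) = ∏ j, (d' j : ℂ) :=
    Finset.prod_congr rfl fun j _ => by
      rw [if_pos (by rw [hm j]; exact Dvd.intro _ rfl)]
  rw [hif]
  have hexp : ∀ t : ∀ j, Fin (p j),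
      (∑ j, (((m j : ℕ) : ℂ) / ((d' j : ℂ) * (p j : ℂ))) * (((t j : ℕ) : ℂ) + 1))
        = ∑ j, (((k j : ℕ) : ℂ) / (p j : ℂ)) * (((t j : ℕ) : ℂ) + 1) := by
    intro t
    refine Finset.sum_congr rfl fun j _ => ?_
    rw [hm j]
    push_cast
    rw [mul_div_mul_left _ _ (hdc j)]
  rw [Finset.sum_congr rfl fun t _ => by rw [hexp t]]
  unfold Vhat
  have hpd : (∏ j, (d' j : ℂ)) ≠ 0 := Finset.prod_ne_zero_iff.mpr fun j _ => hdc j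
  have hpp : (∏ j, (p j : ℂ)) ≠ 0 := Finset.prod_ne_zero_iff.mpr fun j _ => hpc j
  rw [show (∏ j, ((d' j : ℂ) * (p j : ℂ))) = (∏ j, (d' j : ℂ)) * ∏ j, (p j : ℂ) from
    Finset.prod_mul_distrib]
  have key : ∀ (a b S : ℂ), a ≠ 0 → b ≠ 0 → (a * b)⁻¹ * (S * a) = b⁻¹ * S := by
    intro a b S ha hb
    field_simp
  exact key _ _ _ hpd hpp

lemma charpoly_blockDiagonal {m o : Type*} [Fintype m] [DecidableEq m] [Fintype o]
    [DecidableEq o] (M : o → Matrix m m ℂ) :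
    (Matrix.blockDiagonal M).charpoly = ∏ k, (M k).charpoly := by
  unfold Matrix.charpoly
  rw [← Matrix.det_blockDiagonal]
  congr 1
  refine Matrix.ext ?_
  rintro ⟨i, a⟩ ⟨j, b⟩
  by_cases hab : a = b
  · subst hab
    rw [Matrix.blockDiagonal_apply_eq (fun k => (M k).charmatrix) i j a]
    by_cases hij : i = j
    · subst hij
      rw [Matrix.charmatrix_apply_eq, Matrix.charmatrix_apply_eq,
        Matrix.blockDiagonal_apply_eq]
    · have hne : ((i, a) : m × o) ≠ (j, a) := by simp [hij]
      rw [Matrix.charmatrix_apply_ne _ _ _ hne, Matrix.charmatrix_apply_ne _ _ _ hij,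
        Matrix.blockDiagonal_apply_eq]
  · have hne : ((i, a) : m × o) ≠ (j, b) := by simp [hab]
    rw [Matrix.blockDiagonal_apply_ne (fun k => (M k).charmatrix) i j hab,
      Matrix.charmatrix_apply_ne _ _ _ hne, Matrix.blockDiagonal_apply_ne _ _ _ hab]
    simp

lemma floquet_decomp (p d' : Fin d → ℕ) (hp : ∀ j, 0 < p j) (hd' : ∀ j, 0 < d' j)
    (V : (Fin d → ℤ) → ℝ) (hV : IsPeriodic p V) (θ : Fin d → ℂ) :
    Matrix.reindex ((splitEquiv d' p hd').trans (Equiv.prodComm _ _))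
        ((splitEquiv d' p hd').trans (Equiv.prodComm _ _))
        (floquet (fun j => d' j * p j) V θ)
      = Matrix.blockDiagonal (fun r : ∀ j, Fin (d' j) =>
          floquet p V (fun j => θ j + ((r j : ℕ) : ℂ) / ((d' j : ℂ) * (p j : ℂ)))) := by
  have hpc : ∀ j, (p j : ℂ) ≠ 0 := fun j => Nat.cast_ne_zero.mpr (hp j).ne'
  have hdc : ∀ j, (d' j : ℂ) ≠ 0 := fun j => Nat.cast_ne_zero.mpr (hd' j).ne'
  set E := (splitEquiv d' p hd').trans (Equiv.prodComm _ _) with hE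
  ext ⟨t, r⟩ ⟨u, s⟩
  rw [Matrix.reindex_apply, Matrix.blockDiagonal_apply]
  have hEsymm : ∀ (x : (∀ j, Fin (p j)) × (∀ j, Fin (d' j))) (j : Fin d),
      ((E.symm x) j : ℕ) = (x.2 j : ℕ) + d' j * (x.1 j : ℕ) := fun x j => rfl
  set l : ∀ j, Fin (d' j * p j) := E.symm (t, r) with hl
  set m : ∀ j, Fin (d' j * p j) := E.symm (u, s) with hmm2
  have hlm : l = m ↔ (t, r) = (u, s) := by
    constructor
    · intro h
      have := congrArg E h
      rwa [hl, hmm2, Equiv.apply_symm_apply, Equiv.apply_symm_apply] at this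
    · intro h
      rw [hl, hmm2, h]
  show (if l = m then _ else 0) + Vhat _ V (l - m) = _
  by_cases hrs : r = s
  · subst hrs
    rw [if_pos rfl]
    have hsub : Vhat (fun j => d' j * p j) V (l - m) = Vhat p V (t - u) := by
      refine VhatB p d' hp hd' V hV (t - u) (l - m) fun j => ?_
      have h1 : l j = ⟨(r j : ℕ) + d' j * (t j : ℕ), by
          rw [← hEsymm (t, r) j]; exact (E.symm (t, r) j).isLt⟩ := Fin.ext (hEsymm (t, r) j)
      have h2 : m j = ⟨(r j : ℕ) + d' j * (u j : ℕ), by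
          rw [← hEsymm (u, r) j]; exact (E.symm (u, r) j).isLt⟩ := Fin.ext (hEsymm (u, r) j)
      show ((l j - m j : Fin (d' j * p j)) : ℕ) = _
      rw [h1, h2, fin_sub_mul (r j : ℕ) (r j).isLt (t j) (u j)]
      rfl
    rw [hsub]
    have hdiag : (if l = m then (∑ j, 2 * Complex.cos (2 * Real.pi *
          (((l j : ℕ) : ℂ) / ((d' j * p j : ℕ) : ℂ) + θ j))) else 0)
        = (if t = u then (∑ j, 2 * Complex.cos (2 * Real.pi *
          (((t j : ℕ) : ℂ) / ((p j : ℂ)) + (θ j + ((r j : ℕ) : ℂ) / ((d' j : ℂ) * (p j : ℂ)))))) else 0) := by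
      by_cases htu : t = u
      · subst htu
        rw [if_pos (hlm.mpr rfl), if_pos rfl]
        refine Finset.sum_congr rfl fun j _ => ?_
        congr 2
        rw [hl, hEsymm (t, r) j]
        push_cast
        field_simp [hpc j, hdc j]
        ring
      · rw [if_neg (fun h => htu (congrArg Prod.fst (hlm.mp h))), if_neg htu]
    rw [hdiag]
    rfl
  · rw [if_neg hrs, if_neg (fun h => hrs (congrArg Prod.snd (hlm.mp h)))]
    obtain ⟨j₀, hj₀⟩ : ∃ j, r j ≠ s j := by
      by_contra hc
      push_neg at hc
      exact hrs (funext hc)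
    have hnd : ¬ d' j₀ ∣ (((l - m) j₀ : ℕ)) := by
      intro hdvd
      apply hj₀
      have := (dvd_fin_sub_iff (l j₀) (m j₀)).mp hdvd
      rw [hl, hmm2] at this
      rw [hEsymm (t, r) j₀, hEsymm (u, s) j₀] at this
      rw [Nat.add_mul_mod_self_left, Nat.add_mul_mod_self_left,
        Nat.mod_eq_of_lt (r j₀).isLt, Nat.mod_eq_of_lt (s j₀).isLt] at this
      exact Fin.ext this
    rw [VhatA p d' hp hd' V hV (l - m) j₀ hnd, zero_add]

end Stmt18Aux

/-- **Floquet decomposition for refined periods.** Let `V` be `p`-periodic,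
`d' ∈ (ℤ₊)^d` and `d'∗p = (d'_j p_j)_j` (so `V` is also `d'∗p`-periodic). For every
`θ ∈ ℝ^d`, `det(λI − Ĥ_{d'∗p, θ}) = ∏_{φ ∈ Φ} det(λI − Ĥ_{p, φ})` where
`Φ = {(θ_j + ℓ_j/(d'_j p_j))_j : 0 ≤ ℓ_j < d'_j}`; in particular the eigenvalues of
`Ĥ_{d'∗p,θ}`, with multiplicity, are the union over `φ ∈ Φ` of those of `Ĥ_{p,φ}`. -/
theorem stmt18 {d : ℕ} (p d' : Fin d → ℕ) (hp : ∀ j, 0 < p j) (hd' : ∀ j, 0 < d' j)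
    (V : (Fin d → ℤ) → ℝ) (hV : IsPeriodic p V) (θ : Fin d → ℝ) :
    ((floquet (fun j => d' j * p j) V (fun j => (θ j : ℂ))).charpoly
        = ∏ l : ∀ j, Fin (d' j),
            (floquet p V
              (fun j => (θ j : ℂ) + ((l j : ℕ) : ℂ) / ((d' j : ℂ) * (p j : ℂ)))).charpoly) ∧
    ((floquet (fun j => d' j * p j) V (fun j => (θ j : ℂ))).charpoly.roots
        = ∑ l : ∀ j, Fin (d' j),
            (floquet p V
              (fun j => (θ j : ℂ) + ((l j : ℕ) : ℂ) / ((d' j : ℂ) * (p j : ℂ)))).charpoly.roots) := by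
  classical
  have hdec := Stmt18Aux.floquet_decomp p d' hp hd' V hV (fun j => (θ j : ℂ))
  have hchar : (floquet (fun j => d' j * p j) V (fun j => (θ j : ℂ))).charpoly
      = ∏ l : ∀ j, Fin (d' j),
          (floquet p V
            (fun j => (θ j : ℂ) + ((l j : ℕ) : ℂ) / ((d' j : ℂ) * (p j : ℂ)))).charpoly := by
    rw [← Matrix.charpoly_reindex
        ((Stmt18Aux.splitEquiv d' p hd').trans (Equiv.prodComm _ _))
        (floquet (fun j => d' j * p j) V (fun j => (θ j : ℂ))),
      hdec, Stmt18Aux.charpoly_blockDiagonal]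
  refine ⟨hchar, ?_⟩
  have hmon : ∀ l : ∀ j, Fin (d' j),
      (floquet p V
        (fun j => (θ j : ℂ) + ((l j : ℕ) : ℂ) / ((d' j : ℂ) * (p j : ℂ)))).charpoly.Monic :=
    fun l => Matrix.charpoly_monic _
  have hne : (∏ l : ∀ j, Fin (d' j),
      (floquet p V
        (fun j => (θ j : ℂ) + ((l j : ℕ) : ℂ) / ((d' j : ℂ) * (p j : ℂ)))).charpoly) ≠ 0 :=
    (Polynomial.monic_prod_of_monic _ _ fun l _ => hmon l).ne_zero
  rw [hchar, Polynomial.roots_prod _ _ hne, Finset.sum_eq_multiset_sum]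
  rfl

end
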